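/- arXiv:1703.00656 — 3 statements merged into one kernel-verified Lean document; each statement's English description precedes it below -/
import Mathlib

section
/- For a bipartite pure state |ψ⟩_{AE} purifying ρ_A, after Alice's projective measurement in the basis {|i⟩}, the conditional entropy of the post-measurement classical-quantum state equals S(ρ_A^diag) − S(ρ_A), where ρ_A^diag is the dephased (diagonal part of) ρ_A; i.e., the quantum intrinsic randomness equals the relative entropy of coherence S(ρ_A ‖ ρ_A^diag). -/
open Matrix

/-- The von Neumann entropy of a Hermitian matrix, S(ρ) = -Σᵢ λᵢ log λᵢ. -/
noncomputable def vNEntropy {m : Type*} [Fintype m] [DecidableEq m]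
    (ρ : Matrix m m ℂ) (h : ρ.IsHermitian) : ℝ :=
  -∑ i, h.eigenvalues i * Real.log (h.eigenvalues i)

/-!
Since `0 * log 0 = 0`, the entropy of a Hermitian matrix only sees its nonzero eigenvalues, i.e.
its characteristic polynomial up to a power of `X`. With `M = ψ` viewed as a `d × dE` matrix,
`ρ_A = M Mᴴ` and `ρ_Eᵀ = Mᴴ M` have the same nonzero spectrum, so `S(ρ_E) = S(ρ_A)`. The
post-measurement state is block diagonal with rank-one blocks `ψᵢ ψᵢᴴ`, whose only nonzero
eigenvalue is `pᵢ = ‖ψᵢ‖²`, so `S(ρ'_{AE}) = S(ρ_A^diag)`.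
-/

open Polynomial

namespace Matrix

variable {R : Type*} [CommRing R] {n o : Type*} [Fintype n] [DecidableEq n] [Fintype o]
  [DecidableEq o]

theorem charmatrix_blockDiagonal (M : o → Matrix n n R) :
    charmatrix (blockDiagonal M) = blockDiagonal fun k => charmatrix (M k) := by
  ext ⟨i, k⟩ ⟨j, k'⟩ : 1
  obtain rfl | hk := eq_or_ne k k'
  · obtain rfl | hi := eq_or_ne i j
    · simp
    · simp [hi]
  · simp [blockDiagonal_apply_ne _ _ _ hk, hk]

theorem charpoly_blockDiagonal (M : o → Matrix n n R) :
    (blockDiagonal M).charpoly = ∏ k, (M k).charpoly := by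
  rw [charpoly, charmatrix_blockDiagonal, det_blockDiagonal]
  rfl

theorem X_mul_charpoly_vecMulVec (u v : n → R) :
    X * (vecMulVec u v).charpoly = X ^ Fintype.card n * (X - C (u ⬝ᵥ v)) := by
  have h := charpoly_mul_comm' (replicateCol Unit u) (replicateRow Unit v)
  rw [← vecMulVec_eq, Fintype.card_unit, pow_one] at h
  rw [h, replicateRow_mul_replicateCol]
  simp [charpoly, charmatrix, dotProduct_comm]

theorem X_pow_mul_charpoly_blockDiagonal_vecMulVec (u v : o → n → R) :
    X ^ Fintype.card o * (blockDiagonal fun k => vecMulVec (u k) (v k)).charpoly =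
      X ^ (Fintype.card n * Fintype.card o) * (diagonal fun k => u k ⬝ᵥ v k).charpoly := by
  simp only [charpoly_blockDiagonal, charpoly_diagonal, pow_mul, ← Finset.card_univ,
    ← Finset.prod_const, ← Finset.prod_mul_distrib, X_mul_charpoly_vecMulVec]

end Matrix

section Entropy

variable {m n : Type*} [Fintype m] [DecidableEq m] [Fintype n] [DecidableEq n]

theorem vNEntropy_eq_sum_roots_charpoly {A : Matrix m m ℂ} (hA : A.IsHermitian) :
    vNEntropy A hA = (A.charpoly.roots.map fun z => Real.negMulLog z.re).sum := by
  simp [vNEntropy, hA.roots_charpoly_eq_eigenvalues, Real.negMulLog, Finset.sum_map_val]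

theorem vNEntropy_eq_of_X_pow_mul_charpoly_eq {A : Matrix m m ℂ} {B : Matrix n n ℂ}
    (hA : A.IsHermitian) (hB : B.IsHermitian) {a b : ℕ}
    (h : X ^ a * A.charpoly = X ^ b * B.charpoly) :
    vNEntropy A hA = vNEntropy B hB := by
  have hroots := congrArg roots h
  rw [roots_mul (mul_ne_zero (pow_ne_zero _ X_ne_zero) (charpoly_monic A).ne_zero),
    roots_mul (mul_ne_zero (pow_ne_zero _ X_ne_zero) (charpoly_monic B).ne_zero),
    roots_X_pow, roots_X_pow] at hroots
  have := congrArg (fun s => (s.map fun z : ℂ => Real.negMulLog z.re).sum) hroots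
  simpa [vNEntropy_eq_sum_roots_charpoly, Multiset.nsmul_singleton] using this

end Entropy

/-- For a bipartite pure state ψ_{AE} purifying ρ_A, after Alice's projective
measurement in the basis {|i⟩}, the conditional entropy of the post-measurement
classical-quantum state, S(ρ'_{AE}) − S(ρ_E), equals S(ρ_A^diag) − S(ρ_A), the
relative entropy of coherence of ρ_A. -/
theorem intrinsic_randomness_eq_relative_entropy_of_coherence
    (d dE : ℕ) (ψ : Fin d → Fin dE → ℂ)
    (ρA : Matrix (Fin d) (Fin d) ℂ)
    (hpur : ∀ i j, ρA i j = ∑ k, ψ i k * (starRingEnd ℂ) (ψ j k))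
    (ρdiag : Matrix (Fin d) (Fin d) ℂ)
    (hdiag : ρdiag = Matrix.diagonal fun i => ρA i i)
    (ρ' : Matrix (Fin d × Fin dE) (Fin d × Fin dE) ℂ)
    (hpost : ∀ ik jl : Fin d × Fin dE,
      ρ' ik jl = if ik.1 = jl.1 then ψ ik.1 ik.2 * (starRingEnd ℂ) (ψ jl.1 jl.2) else 0)
    (ρE : Matrix (Fin dE) (Fin dE) ℂ)
    (hE : ∀ k l, ρE k l = ∑ i, ψ i k * (starRingEnd ℂ) (ψ i l))
    (hA : ρA.IsHermitian) (hD : ρdiag.IsHermitian) (h' : ρ'.IsHermitian)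
    (hEh : ρE.IsHermitian) :
    vNEntropy ρ' h' - vNEntropy ρE hEh = vNEntropy ρdiag hD - vNEntropy ρA hA := by
  have hρA : ρA = of ψ * (of ψ)ᴴ := by
    ext i j
    simp [hpur, mul_apply]
  have hρE : ρEᵀ = (of ψ)ᴴ * of ψ := by
    ext k l
    simp [hE, mul_apply, mul_comm]
  have hρ' : ρ' = reindex (.prodComm _ _) (.prodComm _ _)
      (blockDiagonal fun i => vecMulVec (ψ i) (star (ψ i))) := by
    ext ⟨i, k⟩ ⟨j, l⟩
    rw [hpost]
    obtain rfl | hij := eq_or_ne i j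
    · simp [vecMulVec_apply]
    · simp [hij, blockDiagonal_apply_ne _ _ _ hij]
  have hρdiag : ρdiag = diagonal fun i => ψ i ⬝ᵥ star (ψ i) := by
    simp [hdiag, hpur, dotProduct]
  have hEA : vNEntropy ρE hEh = vNEntropy ρA hA := by
    refine vNEntropy_eq_of_X_pow_mul_charpoly_eq _ _ (a := d) (b := dE) ?_
    rw [← charpoly_transpose, hρE, hρA]
    simpa using (charpoly_mul_comm' (of ψ) (of ψ)ᴴ).symm
  have hpost_diag : vNEntropy ρ' h' = vNEntropy ρdiag hD := by
    refine vNEntropy_eq_of_X_pow_mul_charpoly_eq _ _ (a := d) (b := dE * d) ?_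
    rw [hρ', charpoly_reindex, hρdiag]
    simpa using X_pow_mul_charpoly_blockDiagonal_vecMulVec ψ fun i => star (ψ i)
  rw [hEA, hpost_diag]
end

section
/- In the single-run CHSH scenario with deterministic outputs p_A(0|x,λ)=p_B(0|y,λ)=1 and input distribution q_A(x)q_B(y) satisfying max q_A ≤ P_A, max q_B ≤ P_B, the CHSH value S_λ = 4[1 − 2(1−P_A)(1−P_B)] is maximized subject to P_A·P_B = P by taking P_B = 1/2, P_A = 2P, yielding S_λ ≤ 8P for P ∈ [1/4, 1/2]. -/
/-- Single-run CHSH with deterministic all-zero outputs and factorizable input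
distribution with marginal maxima P_A, P_B satisfying P_A·P_B = P: the value
S = 4[1 − 2(1−P_A)(1−P_B)] attains its maximum 8P (achieved at P_B = 1/2,
P_A = 2P) for P ∈ [1/4, 1/2]. -/
theorem chsh_single_run_biased (P : ℝ) (hP1 : 1 / 4 ≤ P) (hP2 : P ≤ 1 / 2) :
    IsGreatest {S : ℝ | ∃ PA PB : ℝ,
        1 / 2 ≤ PA ∧ PA ≤ 1 ∧ 1 / 2 ≤ PB ∧ PB ≤ 1 ∧ PA * PB = P ∧
        S = 4 * (1 - 2 * (1 - PA) * (1 - PB))} (8 * P) := by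
  constructor
  · exact ⟨2 * P, 1 / 2, by linarith, by linarith, le_refl _, by norm_num, by ring, by ring⟩
  · rintro S ⟨PA, PB, h1, h2, h3, h4, h5, rfl⟩
    nlinarith [mul_nonneg (by linarith : (0:ℝ) ≤ 2 * PA - 1) (by linarith : (0:ℝ) ≤ 2 * PB - 1)]
end

section
/- In the CH test with imperfect input randomness bounded by Q ≤ p(x,y|λ) ≤ P, the optimal local-hidden-variable CH value satisfies J(P,Q) = (1−4Q)·J'((P−Q)/(1−4Q), 0): the substitution p'ᵢ = (pᵢ − Q)/(1−4Q) maps the constraint set {Q ≤ pᵢ ≤ P, Σᵢpᵢ=1} bijectively onto {0 ≤ p'ᵢ ≤ (P−Q)/(1−4Q), Σᵢp'ᵢ=1}, and the CH objective (being linear homogeneous in the pᵢ differences) scales by the factor (1−4Q). -/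
open Finset

/-- The substitution p'ᵢ = (pᵢ − Q)/(1−4Q) maps the constraint set
{Q ≤ pᵢ ≤ P, Σpᵢ = 1} bijectively onto {0 ≤ p'ᵢ ≤ (P−Q)/(1−4Q), Σp'ᵢ = 1}, and each
of the five CH strategy linear forms scales by the factor (1−4Q); hence
J(P,Q) = (1−4Q)·J'((P−Q)/(1−4Q), 0). -/
theorem ch_rescaling (P Q : ℝ) (hQ0 : 0 ≤ Q) (hQ : Q < 1 / 4)
    (hP : 1 / 4 ≤ P) (hP1 : P ≤ 1)
    (p p' : Fin 4 → ℝ) (hsub : ∀ i, p i = (1 - 4 * Q) * p' i + Q) :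
    (((∀ i, Q ≤ p i ∧ p i ≤ P) ∧ ∑ i, p i = 1) ↔
      ((∀ i, 0 ≤ p' i ∧ p' i ≤ (P - Q) / (1 - 4 * Q)) ∧ ∑ i, p' i = 1))
    ∧ (p 2 - p 0) / 2 = (1 - 4 * Q) * ((p' 2 - p' 0) / 2)
    ∧ (p 1 - p 0) / 2 = (1 - 4 * Q) * ((p' 1 - p' 0) / 2)
    ∧ (p 1 - p 2) / 2 = (1 - 4 * Q) * ((p' 1 - p' 2) / 2)
    ∧ (p 2 - p 1) / 2 = (1 - 4 * Q) * ((p' 2 - p' 1) / 2)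
    ∧ (p 1 + p 2) / 2 - p 3 = (1 - 4 * Q) * ((p' 1 + p' 2) / 2 - p' 3) := by
  have h4 : (0:ℝ) < 1 - 4 * Q := by linarith
  refine ⟨?_, ?_, ?_, ?_, ?_, ?_⟩
  · constructor
    · rintro ⟨hb, hs⟩
      refine ⟨fun i => ?_, ?_⟩
      · obtain ⟨h1, h2⟩ := hb i
        rw [hsub i] at h1 h2
        constructor
        · nlinarith
        · rw [le_div_iff₀ h4]; nlinarith
      · have : ∑ i, p i = (1 - 4 * Q) * ∑ i, p' i + 4 * Q := by
          simp [Fin.sum_univ_four, hsub]; ring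
        rw [this] at hs
        exact mul_left_cancel₀ (ne_of_gt h4)
          (by rw [mul_one]; linarith : (1 - 4 * Q) * ∑ i, p' i = (1 - 4 * Q) * 1)
    · rintro ⟨hb, hs⟩
      refine ⟨fun i => ?_, ?_⟩
      · obtain ⟨h1, h2⟩ := hb i
        rw [le_div_iff₀ h4] at h2
        rw [hsub i]
        constructor <;> nlinarith
      · rw [Fin.sum_univ_four] at hs ⊢
        rw [hsub 0, hsub 1, hsub 2, hsub 3]
        nlinarith
  all_goals simp only [hsub]; ring
end
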